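/- arXiv:math/0604243 — 6 statements merged into one kernel-verified Lean document; each statement's English description precedes it below -/
import Mathlib

section
/- Let a₁₁, a₁₂ : ℝ → ℝ be arbitrary functions and let c₁, c₂ be real constants. Define the 2×2 real matrix-valued function A(t) whose entries are A(t)₁₁ = a₁₁(t), A(t)₁₂ = a₁₂(t), A(t)₂₁ = c₁·a₁₂(t), A(t)₂₂ = a₁₁(t) + c₂·a₁₂(t). Then A is functionally commutative, i.e. A(t')·A(t'') = A(t'')·A(t') for all t', t'' ∈ ℝ. -/
/-- A matrix-valued function of the form
`A(t) = !![a₁₁ t, a₁₂ t; c₁ * a₁₂ t, a₁₁ t + c₂ * a₁₂ t]` is functionally commutative: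
`A(t') * A(t'') = A(t'') * A(t')` for all `t', t''`. -/
theorem functionally_commutative_of_special_form
    (a₁₁ a₁₂ : ℝ → ℝ) (c₁ c₂ : ℝ)
    (A : ℝ → Matrix (Fin 2) (Fin 2) ℝ)
    (hA : ∀ t, A t = !![a₁₁ t, a₁₂ t; c₁ * a₁₂ t, a₁₁ t + c₂ * a₁₂ t]) :
    ∀ t' t'' : ℝ, A t' * A t'' = A t'' * A t' := by
  intro t' t''
  rw [hA t', hA t'']
  ext i j
  fin_cases i <;> fin_cases j <;>
    simp [Matrix.mul_apply, Fin.sum_univ_succ] <;> ring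
end

section
/- Let A : ℝ → Matrix (Fin 2) (Fin 2) ℝ be continuous and functionally commutative, i.e. A(t')·A(t'') = A(t'')·A(t') for all t', t'' ∈ ℝ. Define X(t) = exp(∫₀ᵗ A(τ) dτ), the matrix exponential of the entrywise integral of A from 0 to t. Then X is differentiable and satisfies the matrix differential equation X'(t) = A(t)·X(t) for all t ∈ ℝ, with X(0) equal to the identity matrix; in particular, since exp of a matrix is invertible, X(t) is a fundamental matrix of solutions of the linear system Ẋ = A(t)X. -/
attribute [local instance] Matrix.linftyOpNormedAddCommGroup Matrix.linftyOpNormedRing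
  Matrix.linftyOpNormedSpace Matrix.linftyOpNormedAlgebra

/-!
Since the values of `A` commute, so do the values of `B t = ∫₀ᵗ A`. Hence
`exp (B s) = exp (B s - B t) * exp (B t)`, and differentiating the first factor at `s = t`
only needs the derivative `1` of `exp` at `0`: this gives `X' t = A t * X t`.
-/

open NormedSpace

section BanachAlgebra

variable {𝔸 : Type*} [NormedRing 𝔸] [NormedAlgebra ℝ 𝔸] [CompleteSpace 𝔸]

theorem Commute.intervalIntegral_right {x : 𝔸} {f : ℝ → 𝔸} {a b : ℝ}
    (hf : IntervalIntegrable f MeasureTheory.volume a b) (h : ∀ s, Commute x (f s)) :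
    Commute x (∫ s in a..b, f s) := by
  have hleft := (ContinuousLinearMap.mul ℝ 𝔸 x).intervalIntegral_comp_comm hf
  have hright := ((ContinuousLinearMap.mul ℝ 𝔸).flip x).intervalIntegral_comp_comm hf
  simp only [ContinuousLinearMap.mul_apply', ContinuousLinearMap.flip_apply] at hleft hright
  rw [Commute, SemiconjBy, ← hleft, ← hright]
  exact intervalIntegral.integral_congr fun s _ => h s

theorem Commute.intervalIntegral_intervalIntegral {f : ℝ → 𝔸} (hf : Continuous f)
    (hcomm : ∀ s t, Commute (f s) (f t)) (a b c d : ℝ) :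
    Commute (∫ s in a..b, f s) (∫ t in c..d, f t) :=
  Commute.intervalIntegral_right (hf.intervalIntegrable c d) fun t =>
    (Commute.intervalIntegral_right (hf.intervalIntegrable a b) fun s => hcomm t s).symm

theorem hasDerivAt_exp_of_commute {B : ℝ → 𝔸} {B' : 𝔸} {t : ℝ} (hB : HasDerivAt B B' t)
    (hcomm : ∀ s, Commute (B s) (B t)) :
    HasDerivAt (fun s => exp (B s)) (B' * exp (B t)) t := by
  have hexp_shift : HasDerivAt (fun s => exp (B s - B t)) B' t := by
    have hexp : HasFDerivAt exp (1 : 𝔸 →L[ℝ] 𝔸) (B t - B t) := by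
      rw [sub_self]
      exact hasFDerivAt_exp_zero
    exact hexp.comp_hasDerivAt t (hB.sub_const _)
  have hsplit : ∀ s, exp (B s) = exp (B s - B t) * exp (B t) := fun s => by
    rw [← exp_add_of_commute_of_mem_ball (𝕂 := ℝ) ((hcomm s).sub_left (Commute.refl _))
      (by simp [expSeries_radius_eq_top]) (by simp [expSeries_radius_eq_top]), sub_add_cancel]
  simpa only [← hsplit] using hexp_shift.mul_const (exp (B t))

end BanachAlgebra

theorem Matrix.intervalIntegral_apply {m n : Type*} [Fintype m] [Fintype n]
    {f : ℝ → Matrix m n ℝ} (hf : Continuous f) (a b : ℝ) (i : m) (j : n) :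
    (∫ τ in a..b, f τ) i j = ∫ τ in a..b, f τ i j :=
  ((Matrix.entryLinearMap ℝ ℝ i j).toContinuousLinearMap.intervalIntegral_comp_comm
    (hf.intervalIntegrable a b)).symm

/-- If `A : ℝ → Matrix (Fin 2) (Fin 2) ℝ` is continuous and functionally
commutative, then `X(t) = exp (∫₀ᵗ A(τ) dτ)` (entrywise integral, matrix exponential) is
differentiable with `X'(t) = A(t) * X(t)`, satisfies `X(0) = 1`, and each `X(t)` is
invertible, so `X` is a fundamental matrix of the system `Ẋ = A(t)X`. -/
theorem fundamental_matrix_of_functionally_commutative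
    (A : ℝ → Matrix (Fin 2) (Fin 2) ℝ)
    (hAcont : Continuous A)
    (hAcomm : ∀ t' t'' : ℝ, A t' * A t'' = A t'' * A t')
    (X : ℝ → Matrix (Fin 2) (Fin 2) ℝ)
    (hX : ∀ t : ℝ, X t =
      NormedSpace.exp (Matrix.of fun i j => ∫ τ in (0 : ℝ)..t, A τ i j)) :
    (∀ t : ℝ, HasDerivAt X (A t * X t) t) ∧ X 0 = 1 ∧ ∀ t : ℝ, IsUnit (X t) := by
  have hXexp : X = fun t => exp (∫ τ in (0 : ℝ)..t, A τ) := funext fun t => by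
    rw [hX t]
    congr 1
    ext i j
    exact (Matrix.intervalIntegral_apply hAcont 0 t i j).symm
  subst hXexp
  refine ⟨fun t => ?_, by simp, fun t => isUnit_exp _⟩
  exact hasDerivAt_exp_of_commute (hAcont.integral_hasStrictDerivAt 0 t).hasDerivAt
    fun s => Commute.intervalIntegral_intervalIntegral hAcont hAcomm 0 s 0 t
end

section
/- Let c₁, c₂ ∈ ℝ with c₁ ≠ 0, let F : ℝ → ℝ be differentiable and nonvanishing on an open interval I, and let u : ℝ → ℝ be twice differentiable with u(t) ≠ 0 on I and satisfying the constant-coefficient linear equation u''(t) = c₂·u'(t) + c₁·u(t) on I. Then the function y(t) = F(t)·u'(t)/(c₁·u(t)) satisfies the Riccati equation y'(t) = −(c₁/F(t))·y(t)² + (c₂ + F'(t)/F(t))·y(t) + F(t) on I. -/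
/-- With `F` an arbitrary differentiable nonvanishing function on the open
interval `I` and `u` a nonvanishing solution of `u'' = c₂ u' + c₁ u` on `I` (`c₁ ≠ 0`),
the function `y = F u' / (c₁ u)` satisfies the Riccati equation
`y' = -(c₁/F) y² + (c₂ + F'/F) y + F` on `I`. -/
theorem riccati_F_arbitrary
    (I : Set ℝ) (hI : IsOpen I)
    (c₁ c₂ : ℝ) (hc₁ : c₁ ≠ 0)
    (F u : ℝ → ℝ)
    (hF : ∀ t ∈ I, DifferentiableAt ℝ F t)
    (hF0 : ∀ t ∈ I, F t ≠ 0)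
    (hu1 : ∀ t ∈ I, DifferentiableAt ℝ u t)
    (hu2 : ∀ t ∈ I, DifferentiableAt ℝ (deriv u) t)
    (hu0 : ∀ t ∈ I, u t ≠ 0)
    (hode : ∀ t ∈ I, deriv (deriv u) t = c₂ * deriv u t + c₁ * u t)
    (y : ℝ → ℝ)
    (hy : ∀ t, y t = F t * deriv u t / (c₁ * u t)) :
    ∀ t ∈ I, deriv y t =
      -(c₁ / F t) * (y t) ^ 2 + (c₂ + deriv F t / F t) * y t + F t := by
  intro t ht
  have hyf : y = fun s => F s * deriv u s / (c₁ * u s) := funext hy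
  have hden : c₁ * u t ≠ 0 := mul_ne_zero hc₁ (hu0 t ht)
  have hnum : HasDerivAt (fun s => F s * deriv u s)
      (deriv F t * deriv u t + F t * deriv (deriv u) t) t :=
    ((hF t ht).hasDerivAt).mul ((hu2 t ht).hasDerivAt)
  have hden' : HasDerivAt (fun s => c₁ * u s) (c₁ * deriv u t) t :=
    ((hu1 t ht).hasDerivAt).const_mul c₁
  have hdy : HasDerivAt y
      (((deriv F t * deriv u t + F t * deriv (deriv u) t) * (c₁ * u t) -
        F t * deriv u t * (c₁ * deriv u t)) / (c₁ * u t) ^ 2) t := by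
    rw [hyf]; exact hnum.div hden' hden
  rw [hdy.deriv, hy t, hode t ht]
  field_simp [hF0 t ht, hu0 t ht]
  ring
end

section
/- Let c₁, c₂, C ∈ ℝ with c₁ ≠ 0 and D := c₂² + 4c₁ > 0, and let F : ℝ → ℝ be differentiable and nonvanishing on an open interval I. Define y(t) = [((2c₁ + C·c₂)·sinh(½·√D·t) + C·√D·cosh(½·√D·t))·F(t)] / [((2C − c₂)·sinh(½·√D·t) + √D·cosh(½·√D·t))·c₁]. Then at every t ∈ I where the denominator (2C − c₂)·sinh(½·√D·t) + √D·cosh(½·√D·t) is nonzero, y satisfies the Riccati equation y'(t) = −(c₁/F(t))·y(t)² + (c₂ + F'(t)/F(t))·y(t) + F(t). -/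
/-!
Write `y = F u / c₁`; then `y` solves the Riccati equation exactly when `u` solves the
constant-coefficient equation `u' = c₁ + c₂ u - u²`. With `a = √D / 2` and
`m = (2C - c₂) sinh (a t) + √D cosh (a t)`, the numerator of `u` is `(c₂/2) m + m'`, so
`u = c₂/2 + m'/m`; since `m'' = a² m`, the logarithmic derivative `m'/m` solves `v' = a² - v²`,
which after the shift by `c₂/2` is the equation for `u` because `a² = c₂²/4 + c₁`.
-/

open Real

noncomputable def sinhCoshComb (A B a x : ℝ) : ℝ := A * sinh (a * x) + B * cosh (a * x)

theorem hasDerivAt_sinhCoshComb (A B a x : ℝ) :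
    HasDerivAt (sinhCoshComb A B a) (a * sinhCoshComb B A a x) x := by
  have hlin : HasDerivAt (fun x => a * x) a x := by
    simpa using (hasDerivAt_id x).const_mul a
  have hs := ((hasDerivAt_sinh (a * x)).comp x hlin).const_mul A
  have hc := ((hasDerivAt_cosh (a * x)).comp x hlin).const_mul B
  refine (hs.add hc).congr_deriv ?_
  simp only [sinhCoshComb]
  ring

theorem hasDerivAt_sinhCoshComb_div (A B a b t : ℝ) (h0 : sinhCoshComb A B a t ≠ 0) :
    HasDerivAt
      (fun x => sinhCoshComb (b * A + a * B) (b * B + a * A) a x / sinhCoshComb A B a x)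
      (a ^ 2 - (sinhCoshComb (b * A + a * B) (b * B + a * A) a t / sinhCoshComb A B a t
        - b) ^ 2) t := by
  refine ((hasDerivAt_sinhCoshComb _ _ a t).div
    (hasDerivAt_sinhCoshComb A B a t) h0).congr_deriv ?_
  field_simp
  simp only [sinhCoshComb]
  ring

theorem HasDerivAt.riccati_mul_div_const {u F : ℝ → ℝ} {c₁ c₂ F' t : ℝ}
    (hu : HasDerivAt u (c₁ + c₂ * u t - u t ^ 2) t) (hF : HasDerivAt F F' t)
    (hF0 : F t ≠ 0) (hc₁ : c₁ ≠ 0) :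
    HasDerivAt (fun x => F x * u x / c₁)
      (-(c₁ / F t) * (F t * u t / c₁) ^ 2 + (c₂ + F' / F t) * (F t * u t / c₁) + F t) t := by
  refine ((hF.mul hu).div_const c₁).congr_deriv ?_
  field_simp
  ring

theorem riccati_solution_F_arbitrary_general
    (I : Set ℝ)
    (c₁ c₂ C : ℝ) (hc₁ : c₁ ≠ 0)
    (D : ℝ) (hD : D = c₂ ^ 2 + 4 * c₁) (hDpos : 0 < D)
    (F : ℝ → ℝ)
    (hF : ∀ t ∈ I, DifferentiableAt ℝ F t)
    (hF0 : ∀ t ∈ I, F t ≠ 0)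
    (y : ℝ → ℝ)
    (hy : ∀ t, y t =
      ((2 * c₁ + C * c₂) * Real.sinh (1 / 2 * Real.sqrt D * t)
          + C * Real.sqrt D * Real.cosh (1 / 2 * Real.sqrt D * t)) * F t /
        (((2 * C - c₂) * Real.sinh (1 / 2 * Real.sqrt D * t)
          + Real.sqrt D * Real.cosh (1 / 2 * Real.sqrt D * t)) * c₁)) :
    ∀ t ∈ I,
      (2 * C - c₂) * Real.sinh (1 / 2 * Real.sqrt D * t)
          + Real.sqrt D * Real.cosh (1 / 2 * Real.sqrt D * t) ≠ 0 →
      deriv y t = -(c₁ / F t) * (y t) ^ 2 + (c₂ + deriv F t / F t) * y t + F t := by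
  intro t ht hden
  set a := 1 / 2 * √D with ha
  set M := sinhCoshComb (2 * C - c₂) √D a
  set N := sinhCoshComb (2 * c₁ + C * c₂) (C * √D) a
  have hsq : √D ^ 2 = c₂ ^ 2 + 4 * c₁ := by rw [sq_sqrt hDpos.le, hD]
  have hsinh : c₂ / 2 * (2 * C - c₂) + a * √D = 2 * c₁ + C * c₂ := by
    linear_combination √D * ha + (1 / 2 : ℝ) * hsq
  have hcosh : c₂ / 2 * √D + a * (2 * C - c₂) = C * √D := by
    linear_combination (2 * C - c₂) * ha
  have hu := hasDerivAt_sinhCoshComb_div (2 * C - c₂) √D a (c₂ / 2) t hden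
  rw [hsinh, hcosh] at hu
  have hu_riccati : HasDerivAt (fun x => N x / M x) (c₁ + c₂ * (N t / M t) - (N t / M t) ^ 2) t :=
    hu.congr_deriv (by linear_combination (a + 1 / 2 * √D) * ha + (1 / 4 : ℝ) * hsq)
  have hy_riccati := hu_riccati.riccati_mul_div_const (hF t ht).hasDerivAt (hF0 t ht) hc₁
  obtain rfl : y = fun x => F x * (N x / M x) / c₁ := by
    funext x
    rw [hy, ← div_div]
    simp only [M, N, sinhCoshComb]
    ring
  exact hy_riccati.deriv

/-- Explicit solution of the Riccati equation
`y' = -(c₁/F) y² + (c₂ + F'/F) y + F` when `F` is arbitrary differentiable nonvanishing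
and `D = c₂² + 4c₁ > 0`. -/
theorem riccati_solution_F_arbitrary
    (I : Set ℝ) (hI : IsOpen I)
    (c₁ c₂ C : ℝ) (hc₁ : c₁ ≠ 0)
    (D : ℝ) (hD : D = c₂ ^ 2 + 4 * c₁) (hDpos : 0 < D)
    (F : ℝ → ℝ)
    (hF : ∀ t ∈ I, DifferentiableAt ℝ F t)
    (hF0 : ∀ t ∈ I, F t ≠ 0)
    (y : ℝ → ℝ)
    (hy : ∀ t, y t =
      ((2 * c₁ + C * c₂) * Real.sinh (1 / 2 * Real.sqrt D * t)
          + C * Real.sqrt D * Real.cosh (1 / 2 * Real.sqrt D * t)) * F t /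
        (((2 * C - c₂) * Real.sinh (1 / 2 * Real.sqrt D * t)
          + Real.sqrt D * Real.cosh (1 / 2 * Real.sqrt D * t)) * c₁)) :
    ∀ t ∈ I,
      (2 * C - c₂) * Real.sinh (1 / 2 * Real.sqrt D * t)
          + Real.sqrt D * Real.cosh (1 / 2 * Real.sqrt D * t) ≠ 0 →
      deriv y t = -(c₁ / F t) * (y t) ^ 2 + (c₂ + deriv F t / F t) * y t + F t :=
  riccati_solution_F_arbitrary_general I c₁ c₂ C hc₁ D hD hDpos F hF hF0 y hy
end

section
/- Let c₁, c₂, C ∈ ℝ with c₁ ≠ 0 and D := c₂² + 4c₁ > 0, and let P : ℝ → ℝ be differentiable and nonvanishing on an open interval I. Define y(t) = [(2c₁ + C·c₂)·sinh(½·√D·t) + C·√D·cosh(½·√D·t)] / [((c₂ − 2C)·sinh(½·√D·t) − √D·cosh(½·√D·t))·P(t)]. Then at every t ∈ I where (c₂ − 2C)·sinh(½·√D·t) − √D·cosh(½·√D·t) is nonzero, y satisfies the Riccati equation y'(t) = P(t)·y(t)² + (c₂ − P'(t)/P(t))·y(t) − c₁/P(t). -/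
/-!
The substitution `y = -u' / (P u)` turns the Riccati equation `y' = P y² + Q y + F` into the
linear equation `u'' = (Q + P'/P) u' - F P u`, which for `Q = c₂ - P'/P`, `F = -c₁/P` has constant
coefficients: `u'' = c₂ u' + c₁ u`. Its solutions are `u = exp (c₂ t / 2) · q` with
`q = a sinh (√D t / 2) + b cosh (√D t / 2)`, and for `a = c₂ - 2C`, `b = -√D` the quotient
`-u' / (P u)` is the given `y`.
-/

open Real

theorem riccati_deriv_of_linear_second_order {P u y : ℝ → ℝ} {t Q F : ℝ}
    (hu : DifferentiableAt ℝ u t) (hu' : DifferentiableAt ℝ (deriv u) t)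
    (hP : DifferentiableAt ℝ P t) (hu0 : u t ≠ 0) (hP0 : P t ≠ 0)
    (hlin : deriv (deriv u) t = (Q + deriv P t / P t) * deriv u t - F * P t * u t)
    (hy : y = fun s => -deriv u s / (P s * u s)) :
    deriv y t = P t * y t ^ 2 + Q * y t + F := by
  have hPu : P t * u t ≠ 0 := mul_ne_zero hP0 hu0
  have hder := hu'.hasDerivAt.fun_neg.fun_div (hP.hasDerivAt.fun_mul hu.hasDerivAt) hPu
  subst hy
  rw [hder.deriv, hlin]
  field_simp
  ring

theorem hasDerivAt_exp_mul {q : ℝ → ℝ} {q' c s : ℝ} (hq : HasDerivAt q q' s) :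
    HasDerivAt (fun s => exp (c * s) * q s) (exp (c * s) * (c * q s + q')) s := by
  have hexp : HasDerivAt (fun s => exp (c * s)) (exp (c * s) * c) s := by
    simpa using ((hasDerivAt_id s).const_mul c).exp
  exact (hexp.fun_mul hq).congr_deriv (by ring)

theorem deriv_exp_mul {q q' : ℝ → ℝ} {c : ℝ} (hq : ∀ s, HasDerivAt q (q' s) s) :
    deriv (fun s => exp (c * s) * q s) = fun s => exp (c * s) * (c * q s + q' s) :=
  funext fun s => (hasDerivAt_exp_mul (hq s)).deriv

theorem hasDerivAt_deriv_exp_mul {q q' : ℝ → ℝ} {k c₁ c₂ : ℝ}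
    (hq : ∀ s, HasDerivAt q (q' s) s) (hq' : ∀ s, HasDerivAt q' (k ^ 2 * q s) s)
    (hk : 4 * k ^ 2 = c₂ ^ 2 + 4 * c₁) (s : ℝ) :
    HasDerivAt (deriv fun s => exp (c₂ / 2 * s) * q s)
      (c₂ * deriv (fun s => exp (c₂ / 2 * s) * q s) s + c₁ * (exp (c₂ / 2 * s) * q s)) s := by
  rw [deriv_exp_mul hq]
  exact (hasDerivAt_exp_mul (((hq s).const_mul (c₂ / 2)).fun_add (hq' s))).congr_deriv
    (by linear_combination exp (c₂ / 2 * s) * q s / 4 * hk)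

theorem hasDerivAt_sinh_mul_add_cosh_mul (a b k s : ℝ) :
    HasDerivAt (fun s => a * sinh (k * s) + b * cosh (k * s))
      (k * (b * sinh (k * s) + a * cosh (k * s))) s := by
  have hks : HasDerivAt (fun s => k * s) k s := by simpa using (hasDerivAt_id s).const_mul k
  exact ((((hasDerivAt_sinh (k * s)).comp s hks).const_mul a).fun_add
    (((hasDerivAt_cosh (k * s)).comp s hks).const_mul b)).congr_deriv (by ring)

theorem riccati_solution_P_arbitrary_general
    (I : Set ℝ)
    (c₁ c₂ C : ℝ)
    (D : ℝ) (hD : D = c₂ ^ 2 + 4 * c₁) (hDpos : 0 < D)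
    (P : ℝ → ℝ)
    (hP : ∀ t ∈ I, DifferentiableAt ℝ P t)
    (hP0 : ∀ t ∈ I, P t ≠ 0)
    (y : ℝ → ℝ)
    (hy : ∀ t, y t =
      ((2 * c₁ + C * c₂) * Real.sinh (1 / 2 * Real.sqrt D * t)
          + C * Real.sqrt D * Real.cosh (1 / 2 * Real.sqrt D * t)) /
        (((c₂ - 2 * C) * Real.sinh (1 / 2 * Real.sqrt D * t)
          - Real.sqrt D * Real.cosh (1 / 2 * Real.sqrt D * t)) * P t)) :
    ∀ t ∈ I,
      (c₂ - 2 * C) * Real.sinh (1 / 2 * Real.sqrt D * t)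
          - Real.sqrt D * Real.cosh (1 / 2 * Real.sqrt D * t) ≠ 0 →
      deriv y t = P t * (y t) ^ 2 + (c₂ - deriv P t / P t) * y t - c₁ / P t := by
  intro t ht hq
  set k := 1 / 2 * √D
  have hsqrt : √D ^ 2 = c₂ ^ 2 + 4 * c₁ := by rw [sq_sqrt hDpos.le, hD]
  have hk : 4 * k ^ 2 = c₂ ^ 2 + 4 * c₁ := by linear_combination hsqrt
  set a := c₂ - 2 * C
  set b := -√D
  set q := fun s => a * sinh (k * s) + b * cosh (k * s)
  set q' := fun s => k * (b * sinh (k * s) + a * cosh (k * s))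
  have hq_deriv (s : ℝ) : HasDerivAt q (q' s) s := hasDerivAt_sinh_mul_add_cosh_mul a b k s
  have hq'_deriv (s : ℝ) : HasDerivAt q' (k ^ 2 * q s) s :=
    ((hasDerivAt_sinh_mul_add_cosh_mul b a k s).const_mul k).congr_deriv (by ring)
  set u := fun s => exp (c₂ / 2 * s) * q s
  have hu_deriv : deriv u = fun s => exp (c₂ / 2 * s) * (c₂ / 2 * q s + q' s) :=
    deriv_exp_mul hq_deriv
  have hu_deriv2 := hasDerivAt_deriv_exp_mul hq_deriv hq'_deriv hk t
  have hyu : y = fun s => -deriv u s / (P s * u s) := by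
    funext s
    rw [hy, hu_deriv, ← mul_neg, mul_left_comm, mul_div_mul_left _ _ (exp_ne_zero _)]
    congr 1
    · simp only [q, q', a, b, k]; linear_combination -sinh (1 / 2 * √D * s) / 2 * hsqrt
    · ring
  refine (riccati_deriv_of_linear_second_order (Q := c₂ - deriv P t / P t) (F := -c₁ / P t)
    (hasDerivAt_exp_mul (hq_deriv t)).differentiableAt hu_deriv2.differentiableAt (hP t ht)
    ?_ (hP0 t ht) ?_ hyu).trans ?_
  · exact mul_ne_zero (exp_ne_zero _) (by simpa [q, a, b, sub_eq_add_neg] using hq)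
  · rw [hu_deriv2.deriv]
    field_simp [hP0 t ht]
    ring
  · ring

/-- Explicit solution of the Riccati equation
`y' = P y² + (c₂ - P'/P) y - c₁/P` when `P` is arbitrary differentiable nonvanishing
and `D = c₂² + 4c₁ > 0`. -/
theorem riccati_solution_P_arbitrary
    (I : Set ℝ) (hI : IsOpen I)
    (c₁ c₂ C : ℝ) (hc₁ : c₁ ≠ 0)
    (D : ℝ) (hD : D = c₂ ^ 2 + 4 * c₁) (hDpos : 0 < D)
    (P : ℝ → ℝ)
    (hP : ∀ t ∈ I, DifferentiableAt ℝ P t)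
    (hP0 : ∀ t ∈ I, P t ≠ 0)
    (y : ℝ → ℝ)
    (hy : ∀ t, y t =
      ((2 * c₁ + C * c₂) * Real.sinh (1 / 2 * Real.sqrt D * t)
          + C * Real.sqrt D * Real.cosh (1 / 2 * Real.sqrt D * t)) /
        (((c₂ - 2 * C) * Real.sinh (1 / 2 * Real.sqrt D * t)
          - Real.sqrt D * Real.cosh (1 / 2 * Real.sqrt D * t)) * P t)) :
    ∀ t ∈ I,
      (c₂ - 2 * C) * Real.sinh (1 / 2 * Real.sqrt D * t)
          - Real.sqrt D * Real.cosh (1 / 2 * Real.sqrt D * t) ≠ 0 →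
      deriv y t = P t * (y t) ^ 2 + (c₂ - deriv P t / P t) * y t - c₁ / P t :=
  riccati_solution_P_arbitrary_general I c₁ c₂ C D hD hDpos P hP hP0 y hy
end

section
/- Let c₁, c₂, C, C₀ ∈ ℝ with c₁ ≠ 0, C₀ ≠ 0 and D := c₂² + 4c₁ > 0. Let Q : ℝ → ℝ be continuous on an open interval I and let R be an antiderivative of Q on I (R'(t) = Q(t)). Define y(t) = exp(−c₂·t)·exp(R(t)) · [((2c₁ + C·c₂)·sinh(½·√D·t) + C·√D·cosh(½·√D·t))] / [C₀·((c₂ − 2C)·sinh(½·√D·t) − √D·cosh(½·√D·t))]. Then at every t ∈ I where (c₂ − 2C)·sinh(½·√D·t) − √D·cosh(½·√D·t) is nonzero, y satisfies the Riccati equation y'(t) = C₀·exp(c₂·t)·exp(−R(t))·y(t)² + Q(t)·y(t) − (c₁/C₀)·exp(−c₂·t)·exp(R(t)). -/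
/-!
Put `w = e^{R - c₂ t} / C₀`, so that `P = 1 / w` and `F = -c₁ w`. Since `w' = (Q - c₂) w`, the
substitution `y = w v` turns the equation into the constant-coefficient Riccati equation
`v' = v² + c₂ v - c₁`, and it remains to check that `v = N / M` solves it, `N` and `M` being the
hyperbolic combinations in the numerator and the denominator. This is the identity
`N' M - N M' = N² + c₂ N M - c₁ M²`, a polynomial identity in `sinh`, `cosh` and `√D` modulo
`(√D)² = c₂² + 4 c₁`. The formula comes from linearisation: `N = -(c₂/2) M - M'`, so `v = -u'/u`
with `u = e^{c₂ t / 2} M`, a solution of `u'' = c₂ u' + c₁ u`.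
-/

open Real

theorem hasDerivAt_mul_of_hasDerivAt_riccati {w v : ℝ → ℝ} {q a b t : ℝ}
    (hw : HasDerivAt w ((q - b) * w t) t) (hv : HasDerivAt v (v t ^ 2 + b * v t + a) t)
    (hw₀ : w t ≠ 0) :
    HasDerivAt (fun s => w s * v s)
      ((w t)⁻¹ * (w t * v t) ^ 2 + q * (w t * v t) + a * w t) t := by
  refine (hw.mul hv).congr_deriv ?_
  field_simp
  ring

theorem hasDerivAt_div_of_hasDerivAt_riccati {N M : ℝ → ℝ} {N' M' a b t : ℝ}
    (hN : HasDerivAt N N' t) (hM : HasDerivAt M M' t) (hM₀ : M t ≠ 0)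
    (h : N' * M t - N t * M' = N t ^ 2 + b * N t * M t + a * M t ^ 2) :
    HasDerivAt (fun s => N s / M s) ((N t / M t) ^ 2 + b * (N t / M t) + a) t := by
  refine (hN.div hM hM₀).congr_deriv ?_
  field_simp
  linear_combination h

theorem hasDerivAt_sinh_const_mul (k t : ℝ) :
    HasDerivAt (fun s => sinh (k * s)) (cosh (k * t) * k) t :=
  ((hasDerivAt_id t).const_mul k).sinh.congr_deriv (by simp)

theorem hasDerivAt_cosh_const_mul (k t : ℝ) :
    HasDerivAt (fun s => cosh (k * s)) (sinh (k * t) * k) t :=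
  ((hasDerivAt_id t).const_mul k).cosh.congr_deriv (by simp)

section HyperbolicSolution

variable (c₁ c₂ C r : ℝ)

noncomputable def riccatiNum (s : ℝ) : ℝ :=
  (2 * c₁ + C * c₂) * sinh (1 / 2 * r * s) + C * r * cosh (1 / 2 * r * s)

noncomputable def riccatiDen (s : ℝ) : ℝ :=
  (c₂ - 2 * C) * sinh (1 / 2 * r * s) - r * cosh (1 / 2 * r * s)

theorem hasDerivAt_riccatiNum (t : ℝ) :
    HasDerivAt (riccatiNum c₁ c₂ C r)
      (r / 2 * ((2 * c₁ + C * c₂) * cosh (1 / 2 * r * t) + C * r * sinh (1 / 2 * r * t))) t := by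
  refine (((hasDerivAt_sinh_const_mul _ t).const_mul (2 * c₁ + C * c₂)).add
    ((hasDerivAt_cosh_const_mul _ t).const_mul (C * r))).congr_deriv ?_
  ring

theorem hasDerivAt_riccatiDen (t : ℝ) :
    HasDerivAt (riccatiDen c₂ C r)
      (r / 2 * ((c₂ - 2 * C) * cosh (1 / 2 * r * t) - r * sinh (1 / 2 * r * t))) t := by
  refine (((hasDerivAt_sinh_const_mul _ t).const_mul (c₂ - 2 * C)).sub
    ((hasDerivAt_cosh_const_mul _ t).const_mul r)).congr_deriv ?_
  ring

theorem hasDerivAt_riccatiNum_div_riccatiDen (hr : r ^ 2 = c₂ ^ 2 + 4 * c₁) {t : ℝ}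
    (ht : riccatiDen c₂ C r t ≠ 0) :
    HasDerivAt (fun s => riccatiNum c₁ c₂ C r s / riccatiDen c₂ C r s)
      ((riccatiNum c₁ c₂ C r t / riccatiDen c₂ C r t) ^ 2
        + c₂ * (riccatiNum c₁ c₂ C r t / riccatiDen c₂ C r t) + -c₁) t := by
  refine hasDerivAt_div_of_hasDerivAt_riccati (hasDerivAt_riccatiNum c₁ c₂ C r t)
    (hasDerivAt_riccatiDen c₂ C r t) ht ?_
  unfold riccatiNum riccatiDen
  linear_combination (c₁ + c₂ * C - C ^ 2) * sinh (1 / 2 * r * t) ^ 2 * hr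

end HyperbolicSolution

theorem riccati_solution_Q_arbitrary_general
    (I : Set ℝ)
    (c₁ c₂ C C₀ : ℝ) (hC₀ : C₀ ≠ 0)
    (D : ℝ) (hD : D = c₂ ^ 2 + 4 * c₁) (hDpos : 0 < D)
    (Q R : ℝ → ℝ)
    (hR : ∀ t ∈ I, HasDerivAt R (Q t) t)
    (y : ℝ → ℝ)
    (hy : ∀ t, y t =
      Real.exp (-(c₂ * t)) * Real.exp (R t) *
        ((2 * c₁ + C * c₂) * Real.sinh (1 / 2 * Real.sqrt D * t)
          + C * Real.sqrt D * Real.cosh (1 / 2 * Real.sqrt D * t)) /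
        (C₀ * ((c₂ - 2 * C) * Real.sinh (1 / 2 * Real.sqrt D * t)
          - Real.sqrt D * Real.cosh (1 / 2 * Real.sqrt D * t)))) :
    ∀ t ∈ I,
      (c₂ - 2 * C) * Real.sinh (1 / 2 * Real.sqrt D * t)
          - Real.sqrt D * Real.cosh (1 / 2 * Real.sqrt D * t) ≠ 0 →
      deriv y t =
        C₀ * Real.exp (c₂ * t) * Real.exp (-(R t)) * (y t) ^ 2 + Q t * y t
          - (c₁ / C₀) * Real.exp (-(c₂ * t)) * Real.exp (R t) := by
  intro t ht hM
  set w : ℝ → ℝ := fun s => exp (-(c₂ * s)) * exp (R s) / C₀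
  set v : ℝ → ℝ := fun s => riccatiNum c₁ c₂ C √D s / riccatiDen c₂ C √D s
  have hyw : y = fun s => w s * v s := funext fun s => by
    rw [hy s, mul_div_mul_comm]; rfl
  have hw : HasDerivAt w ((Q t - c₂) * w t) t := by
    refine ((((hasDerivAt_id t).const_mul c₂).neg.exp.mul (hR t ht).exp).div_const C₀).congr_deriv
      ?_
    simp only [w, id, Pi.neg_apply]; ring
  have hv : HasDerivAt v (v t ^ 2 + c₂ * v t + -c₁) t :=
    hasDerivAt_riccatiNum_div_riccatiDen c₁ c₂ C √D (by rw [sq_sqrt hDpos.le, hD]) hM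
  have hw₀ : w t ≠ 0 := by simp only [w]; positivity
  rw [hyw, (hasDerivAt_mul_of_hasDerivAt_riccati hw hv hw₀).deriv]
  simp only [w, exp_neg]
  field_simp
  ring

/-- Explicit solution of the Riccati equation
`y' = C₀ e^{c₂ t} e^{-R} y² + Q y - (c₁/C₀) e^{-c₂ t} e^{R}` when `Q` is arbitrary
continuous with antiderivative `R`, and `D = c₂² + 4c₁ > 0`. -/
theorem riccati_solution_Q_arbitrary
    (I : Set ℝ) (hI : IsOpen I)
    (c₁ c₂ C C₀ : ℝ) (hc₁ : c₁ ≠ 0) (hC₀ : C₀ ≠ 0)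
    (D : ℝ) (hD : D = c₂ ^ 2 + 4 * c₁) (hDpos : 0 < D)
    (Q R : ℝ → ℝ)
    (hQ : ContinuousOn Q I)
    (hR : ∀ t ∈ I, HasDerivAt R (Q t) t)
    (y : ℝ → ℝ)
    (hy : ∀ t, y t =
      Real.exp (-(c₂ * t)) * Real.exp (R t) *
        ((2 * c₁ + C * c₂) * Real.sinh (1 / 2 * Real.sqrt D * t)
          + C * Real.sqrt D * Real.cosh (1 / 2 * Real.sqrt D * t)) /
        (C₀ * ((c₂ - 2 * C) * Real.sinh (1 / 2 * Real.sqrt D * t)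
          - Real.sqrt D * Real.cosh (1 / 2 * Real.sqrt D * t)))) :
    ∀ t ∈ I,
      (c₂ - 2 * C) * Real.sinh (1 / 2 * Real.sqrt D * t)
          - Real.sqrt D * Real.cosh (1 / 2 * Real.sqrt D * t) ≠ 0 →
      deriv y t =
        C₀ * Real.exp (c₂ * t) * Real.exp (-(R t)) * (y t) ^ 2 + Q t * y t
          - (c₁ / C₀) * Real.exp (-(c₂ * t)) * Real.exp (R t) :=
  riccati_solution_Q_arbitrary_general I c₁ c₂ C C₀ hC₀ D hD hDpos Q R hR y hy
end
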